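/- Let F be an associative algebra generated by a unital subalgebra U together with a family of pairwise orthogonal idempotents {P_λ}_{λ∈I} such that for every ξ ∈ U and λ ∈ I there exist finite subsets Λ', Λ'' ⊆ I with ξ P_λ = χ_{Λ''} ξ P_λ and P_λ ξ = P_λ ξ χ_{Λ'} (where χ_Λ = Σ_{μ∈Λ} P_μ). Then the two-sided ideal R of F generated by {P_λ} admits {χ_Λ} as an approximate identity: for every r ∈ R there exists a finite Λ ⊆ I with χ_Λ r = r χ_Λ = r. -/

import Mathlib

/-!
Call `r` absorbed if `χ_Λ r = r = r χ_Λ` for some finite `Λ`; since `χ_B χ_A = χ_A = χ_A χ_B`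
for `A ⊆ B`, absorption is monotone in `Λ` and the absorbed elements form an additive subgroup
containing every `P_λ`. It is a two-sided ideal, hence contains `R`, once we know that for every
`f ∈ F` and finite `Λ`, `f χ_Λ` is absorbed on the left and `χ_Λ f` on the right by some `χ_Λ'`.
The elements `f` with this property form a subalgebra, which contains `U` (take unions of the
`Λ` given by the hypothesis over `λ ∈ Λ`) and each `P_μ`, so it is all of `F`.
-/

namespace OrthogonalIdempotents

variable {F : Type*} [Ring F] {I : Type*} [DecidableEq I] {P : I → F}

theorem sum_mul_sum (hP : OrthogonalIdempotents P) (A B : Finset I) :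
    (∑ a ∈ A, P a) * (∑ b ∈ B, P b) = ∑ a ∈ A ∩ B, P a := by
  rw [Finset.sum_mul, ← Finset.sum_ite_mem]
  refine Finset.sum_congr rfl fun a _ => ?_
  split_ifs with ha
  · exact hP.mul_sum_of_mem ha
  · exact hP.mul_sum_of_notMem ha

theorem sum_mul_eq_of_subset (hP : OrthogonalIdempotents P) {A B : Finset I} (hAB : A ⊆ B)
    {r : F} (hr : (∑ a ∈ A, P a) * r = r) : (∑ b ∈ B, P b) * r = r := by
  rw [← hr, ← mul_assoc, hP.sum_mul_sum, Finset.inter_eq_right.mpr hAB]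

theorem mul_sum_eq_of_subset (hP : OrthogonalIdempotents P) {A B : Finset I} (hAB : A ⊆ B)
    {r : F} (hr : r * (∑ a ∈ A, P a) = r) : r * (∑ b ∈ B, P b) = r := by
  rw [← hr, mul_assoc, hP.sum_mul_sum, Finset.inter_eq_left.mpr hAB]

theorem exists_sum_mul_eq_and_mul_sum_eq_of_mem_span (hP : OrthogonalIdempotents P)
    (hleft : ∀ (f : F) (Λ : Finset I), ∃ Λ' : Finset I,
      (∑ μ ∈ Λ', P μ) * (f * ∑ μ ∈ Λ, P μ) = f * ∑ μ ∈ Λ, P μ)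
    (hright : ∀ (f : F) (Λ : Finset I), ∃ Λ' : Finset I,
      ((∑ μ ∈ Λ, P μ) * f) * (∑ μ ∈ Λ', P μ) = (∑ μ ∈ Λ, P μ) * f)
    {r : F} (hr : r ∈ TwoSidedIdeal.span (Set.range P)) :
    ∃ Λ : Finset I, (∑ μ ∈ Λ, P μ) * r = r ∧ r * (∑ μ ∈ Λ, P μ) = r := by
  let absorbed : Set F := {r | ∃ Λ : Finset I, (∑ μ ∈ Λ, P μ) * r = r ∧ r * (∑ μ ∈ Λ, P μ) = r}
  have zero_mem : (0 : F) ∈ absorbed := ⟨∅, mul_zero _, zero_mul _⟩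
  have add_mem {x y : F} : x ∈ absorbed → y ∈ absorbed → x + y ∈ absorbed := by
    rintro ⟨A, hxA, hAx⟩ ⟨B, hyB, hBy⟩
    refine ⟨A ∪ B, ?_, ?_⟩
    · rw [mul_add, hP.sum_mul_eq_of_subset Finset.subset_union_left hxA,
        hP.sum_mul_eq_of_subset Finset.subset_union_right hyB]
    · rw [add_mul, hP.mul_sum_eq_of_subset Finset.subset_union_left hAx,
        hP.mul_sum_eq_of_subset Finset.subset_union_right hBy]
  have neg_mem {x : F} : x ∈ absorbed → -x ∈ absorbed := by
    rintro ⟨A, hxA, hAx⟩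
    exact ⟨A, by rw [mul_neg, hxA], by rw [neg_mul, hAx]⟩
  have mul_mem_left {f x : F} : x ∈ absorbed → f * x ∈ absorbed := by
    rintro ⟨A, hxA, hAx⟩
    obtain ⟨B, hB⟩ := hleft f A
    refine ⟨A ∪ B, hP.sum_mul_eq_of_subset Finset.subset_union_right ?_,
      hP.mul_sum_eq_of_subset Finset.subset_union_left (by rw [mul_assoc, hAx])⟩
    rw [← hxA, ← mul_assoc f, ← mul_assoc, hB]
  have mul_mem_right {x f : F} : x ∈ absorbed → x * f ∈ absorbed := by
    rintro ⟨A, hxA, hAx⟩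
    obtain ⟨B, hB⟩ := hright f A
    refine ⟨A ∪ B, hP.sum_mul_eq_of_subset Finset.subset_union_left (by rw [← mul_assoc, hxA]),
      hP.mul_sum_eq_of_subset Finset.subset_union_right ?_⟩
    rw [← hAx, mul_assoc _ _ f, mul_assoc, hB]
  let J := TwoSidedIdeal.mk' absorbed zero_mem add_mem neg_mem mul_mem_left mul_mem_right
  have hPJ : Set.range P ⊆ J := by
    rintro _ ⟨μ, rfl⟩
    have hμ : P μ * P μ = P μ := (hP.idem μ).eq
    refine (TwoSidedIdeal.mem_mk' absorbed _ _ _ _ _ _).mpr ⟨{μ}, ?_, ?_⟩ <;>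
      rwa [Finset.sum_singleton]
  exact (TwoSidedIdeal.mem_mk' absorbed _ _ _ _ _ r).mp (TwoSidedIdeal.span_le.mpr hPJ hr)

variable {k : Type*} [CommSemiring k] [Algebra k F] {S : Set F}

theorem exists_sum_mul_mul_sum_eq_mul_sum (hP : OrthogonalIdempotents P)
    (hgen : Algebra.adjoin k (S ∪ Set.range P) = ⊤)
    (habs : ∀ ξ ∈ S, ∀ i : I, ∃ Λ : Finset I, (∑ μ ∈ Λ, P μ) * (ξ * P i) = ξ * P i)
    (f : F) (Λ : Finset I) :
    ∃ Λ' : Finset I, (∑ μ ∈ Λ', P μ) * (f * ∑ μ ∈ Λ, P μ) = f * ∑ μ ∈ Λ, P μ := by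
  have hf : f ∈ Algebra.adjoin k (S ∪ Set.range P) := hgen ▸ Algebra.mem_top
  induction hf using Algebra.adjoin_induction generalizing Λ with
  | mem x hx =>
    rcases hx with hx | ⟨μ, rfl⟩
    · choose c hc using habs x hx
      refine ⟨Λ.biUnion c, ?_⟩
      simp only [Finset.mul_sum]
      exact Finset.sum_congr rfl fun i hi =>
        hP.sum_mul_eq_of_subset (Finset.subset_biUnion_of_mem c hi) (hc i)
    · exact ⟨{μ}, by rw [Finset.sum_singleton, ← mul_assoc, (hP.idem μ).eq]⟩
  | algebraMap c =>
    refine ⟨Λ, ?_⟩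
    rw [← mul_assoc, ← Algebra.commutes, mul_assoc, (hP.isIdempotentElem_sum).eq]
  | add x y _ _ ihx ihy =>
    obtain ⟨A, hA⟩ := ihx Λ
    obtain ⟨B, hB⟩ := ihy Λ
    refine ⟨A ∪ B, ?_⟩
    rw [add_mul, mul_add, hP.sum_mul_eq_of_subset Finset.subset_union_left hA,
      hP.sum_mul_eq_of_subset Finset.subset_union_right hB]
  | mul x y _ _ ihx ihy =>
    obtain ⟨B, hB⟩ := ihy Λ
    obtain ⟨A, hA⟩ := ihx B
    refine ⟨A, ?_⟩
    rw [mul_assoc x, ← hB, ← mul_assoc x, ← mul_assoc, hA]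

theorem exists_sum_mul_mul_sum_eq_sum_mul (hP : OrthogonalIdempotents P)
    (hgen : Algebra.adjoin k (S ∪ Set.range P) = ⊤)
    (habs : ∀ ξ ∈ S, ∀ i : I, ∃ Λ : Finset I, (P i * ξ) * (∑ μ ∈ Λ, P μ) = P i * ξ)
    (f : F) (Λ : Finset I) :
    ∃ Λ' : Finset I, ((∑ μ ∈ Λ, P μ) * f) * (∑ μ ∈ Λ', P μ) = (∑ μ ∈ Λ, P μ) * f := by
  have hf : f ∈ Algebra.adjoin k (S ∪ Set.range P) := hgen ▸ Algebra.mem_top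
  induction hf using Algebra.adjoin_induction generalizing Λ with
  | mem x hx =>
    rcases hx with hx | ⟨μ, rfl⟩
    · choose c hc using habs x hx
      refine ⟨Λ.biUnion c, ?_⟩
      simp only [Finset.sum_mul]
      exact Finset.sum_congr rfl fun i hi =>
        hP.mul_sum_eq_of_subset (Finset.subset_biUnion_of_mem c hi) (hc i)
    · exact ⟨{μ}, by rw [Finset.sum_singleton, mul_assoc, (hP.idem μ).eq]⟩
  | algebraMap c =>
    refine ⟨Λ, ?_⟩
    rw [mul_assoc, Algebra.commutes, ← mul_assoc, (hP.isIdempotentElem_sum).eq, ← Algebra.commutes]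
  | add x y _ _ ihx ihy =>
    obtain ⟨A, hA⟩ := ihx Λ
    obtain ⟨B, hB⟩ := ihy Λ
    refine ⟨A ∪ B, ?_⟩
    rw [mul_add, add_mul, hP.mul_sum_eq_of_subset Finset.subset_union_left hA,
      hP.mul_sum_eq_of_subset Finset.subset_union_right hB]
  | mul x y _ _ ihx ihy =>
    obtain ⟨A, hA⟩ := ihx Λ
    obtain ⟨B, hB⟩ := ihy A
    refine ⟨B, ?_⟩
    rw [← mul_assoc _ x y, ← hA, mul_assoc _ _ y, mul_assoc, hB]

end OrthogonalIdempotents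

/-- Let `F` be an associative algebra generated by a unital
subalgebra `U` together with a family of pairwise orthogonal idempotents
`{P_λ}` such that for every `ξ ∈ U` and `λ` there are finite `Λ', Λ''` with
`ξ P_λ = χ_{Λ''} ξ P_λ` and `P_λ ξ = P_λ ξ χ_{Λ'}` (where
`χ_Λ = ∑_{μ∈Λ} P_μ`).  Then the two-sided ideal `R` of `F` generated by the
`P_λ` admits `{χ_Λ}` as an approximate identity: for each `r ∈ R` there is a
finite `Λ` with `χ_Λ r = r χ_Λ = r`. -/
theorem stmt_12 {k : Type*} [Field k] {F : Type*} [Ring F] [Algebra k F]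
    {I : Type*} [DecidableEq I]
    (U : Subalgebra k F) (P : I → F)
    (horth : ∀ lam mu : I, P lam * P mu = if lam = mu then P lam else 0)
    (hgen : Algebra.adjoin k ((U : Set F) ∪ Set.range P) = ⊤)
    (habs₁ : ∀ ξ ∈ U, ∀ lam : I, ∃ Λ : Finset I,
      (∑ mu ∈ Λ, P mu) * (ξ * P lam) = ξ * P lam)
    (habs₂ : ∀ ξ ∈ U, ∀ lam : I, ∃ Λ : Finset I,
      (P lam * ξ) * (∑ mu ∈ Λ, P mu) = P lam * ξ) :
    ∀ r ∈ TwoSidedIdeal.span (Set.range P), ∃ Λ : Finset I,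
      (∑ mu ∈ Λ, P mu) * r = r ∧ r * (∑ mu ∈ Λ, P mu) = r := by
  have hP : OrthogonalIdempotents P := OrthogonalIdempotents.iff_mul_eq.mpr horth
  intro r hr
  exact hP.exists_sum_mul_eq_and_mul_sum_eq_of_mem_span
    (hP.exists_sum_mul_mul_sum_eq_mul_sum hgen habs₁)
    (hP.exists_sum_mul_mul_sum_eq_sum_mul hgen habs₂) hr
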